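/- arXiv:2205.07371 — 4 statements merged into one kernel-verified Lean document; each statement's English description precedes it below -/
import Mathlib

section
/- Let M = [[M1, M2],[M3*, M4]] be an (n+m)×(n+m) unitary complex matrix with M1 of size n×n and M1, I - M1 invertible. Then I + (M3* M1⁻¹)(M3* M1⁻¹)* = [I - M3* (I - M1)⁻¹ (M1*)⁻¹ M3]* · [I - M3* (I - M1)⁻¹ (M1*)⁻¹ M3]. -/
open Matrix

/-- Abstract algebraic core: inverse identity `p'⁻¹x'⁻¹ = p' + x'` when `x = 1 - p`. -/
lemma factorization_aux_inv {R : Type*} [Ring R] (p x p' x' : R)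
    (hx : x = 1 - p) (hpp' : p * p' = 1) (hp'p : p' * p = 1)
    (hxx' : x * x' = 1) (hx'x : x' * x = 1) :
    p' * x' = p' + x' := by
  have hpx : p * x = x * p := by rw [hx]; noncomm_ring
  have hpx' : p * x' = x' * p := by
    calc p * x' = x' * x * (p * x') := by rw [hx'x, one_mul]
      _ = x' * (x * p) * x' := by noncomm_ring
      _ = x' * (p * x) * x' := by rw [hpx]
      _ = x' * p * (x * x') := by noncomm_ring
      _ = x' * p := by rw [hxx', mul_one]
  have h1 : (x * p) * (p' + x') = 1 := by
    have h : x * p * x' = p := by rw [mul_assoc, hpx', ← mul_assoc, hxx', one_mul]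
    calc (x * p) * (p' + x') = x * (p * p') + x * p * x' := by noncomm_ring
      _ = x + p := by rw [hpp', mul_one, h]
      _ = 1 := by rw [hx]; abel
  have h2 : (p' * x') * (x * p) = 1 := by
    rw [mul_assoc, ← mul_assoc x' x p, hx'x, one_mul, hp'p]
  calc p' * x' = (p' * x') * ((x * p) * (p' + x')) := by rw [h1, mul_one]
    _ = ((p' * x') * (x * p)) * (p' + x') := by noncomm_ring
    _ = p' + x' := by rw [h2, one_mul]

/-- Abstract algebraic core of the factorization identity, for rectangular matrices. -/
lemma factorization_aux {N M : Type*} [Fintype N] [Fintype M] [DecidableEq N] [DecidableEq M]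
    (p q x y p' q' x' y' : Matrix N N ℂ) (a : Matrix M N ℂ) (b : Matrix N M ℂ)
    (hx : x = 1 - p) (hpp' : p * p' = 1) (hp'p : p' * p = 1)
    (hqq' : q * q' = 1) (hxx' : x * x' = 1) (hx'x : x' * x = 1)
    (hy'y : y' * y = 1) (hba : b * a = y + q * x) :
    (1 : Matrix M M ℂ) + a * p' * q' * b
      = ((1 : Matrix M M ℂ) - a * p' * y' * b) * ((1 : Matrix M M ℂ) - a * x' * q' * b) := by
  have hkey : p' * x' = p' + x' := factorization_aux_inv p x p' x' hx hpp' hp'p hxx' hx'x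
  -- y' * (b*a) * x' = x' + y' * q   (all square n×n)
  have h1 : y' * (b * a) * x' = x' + y' * q := by
    rw [hba]
    calc y' * (y + q * x) * x' = y' * y * x' + y' * q * (x * x') := by noncomm_ring
      _ = x' + y' * q := by rw [hy'y, one_mul, hxx', mul_one]
  -- the cross term
  have key1 : (a * p' * y' * b) * (a * x' * q' * b)
      = a * p' * x' * q' * b + a * p' * y' * b := by
    have e1 : (a * p' * y' * b) * (a * x' * q' * b)
        = a * (p' * (y' * (b * a) * x')) * (q' * b) := by
      simp only [Matrix.mul_assoc]
    rw [e1, h1]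
    have e2 : a * (p' * (x' + y' * q)) * (q' * b)
        = a * p' * x' * q' * b + a * (p' * (y' * (q * q'))) * b := by
      simp only [Matrix.mul_add, Matrix.add_mul, Matrix.mul_assoc]
    rw [e2, hqq', Matrix.mul_one]
    simp only [Matrix.mul_assoc]
  have key2 : a * p' * x' * q' * b = a * x' * q' * b + a * p' * q' * b := by
    calc a * p' * x' * q' * b = a * (p' * x') * (q' * b) := by simp only [Matrix.mul_assoc]
      _ = a * (p' + x') * (q' * b) := by rw [hkey]
      _ = a * x' * q' * b + a * p' * q' * b := by
          simp only [Matrix.add_mul, Matrix.mul_add, Matrix.mul_assoc]; abel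
  have expand : ((1 : Matrix M M ℂ) - a * p' * y' * b) * ((1 : Matrix M M ℂ) - a * x' * q' * b)
      = 1 - a * x' * q' * b - a * p' * y' * b
        + (a * p' * y' * b) * (a * x' * q' * b) := by
    simp only [Matrix.sub_mul, Matrix.mul_sub, Matrix.mul_one, Matrix.one_mul]
    abel
  rw [expand, key1, key2]
  abel

set_option maxHeartbeats 1000000 in
/-- For a unitary block matrix [[M1,M2],[M3*,M4]] with M1, I - M1 invertible,
I + (M3*M1⁻¹)(M3*M1⁻¹)* = [I - M3*(I-M1)⁻¹(M1*)⁻¹M3]* · [I - M3*(I-M1)⁻¹(M1*)⁻¹M3]. -/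
theorem factorization_identity {n m : ℕ}
    (M1 : Matrix (Fin n) (Fin n) ℂ) (M2 : Matrix (Fin n) (Fin m) ℂ)
    (M3 : Matrix (Fin n) (Fin m) ℂ) (M4 : Matrix (Fin m) (Fin m) ℂ)
    (hU : Matrix.fromBlocks M1 M2 M3ᴴ M4 ∈ Matrix.unitaryGroup (Fin n ⊕ Fin m) ℂ)
    (h1 : IsUnit M1) (h2 : IsUnit ((1 : Matrix (Fin n) (Fin n) ℂ) - M1)) :
    (1 : Matrix (Fin m) (Fin m) ℂ) + (M3ᴴ * M1⁻¹) * (M3ᴴ * M1⁻¹)ᴴ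
      = ((1 : Matrix (Fin m) (Fin m) ℂ) - M3ᴴ * (1 - M1)⁻¹ * (M1ᴴ)⁻¹ * M3)ᴴ *
        ((1 : Matrix (Fin m) (Fin m) ℂ) - M3ᴴ * (1 - M1)⁻¹ * (M1ᴴ)⁻¹ * M3) := by
  -- extract the unitarity relation on the first block column
  have hstar : star (fromBlocks M1 M2 M3ᴴ M4) * fromBlocks M1 M2 M3ᴴ M4 = 1 := hU.1
  have hone1 : (Matrix.toBlocks₁₁ (1 : Matrix (Fin n ⊕ Fin m) (Fin n ⊕ Fin m) ℂ)) = 1 := by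
    ext i j
    simp [Matrix.toBlocks₁₁, Matrix.one_apply]
  have hblock : M1ᴴ * M1 + M3 * M3ᴴ = 1 := by
    rw [Matrix.star_eq_conjTranspose, Matrix.fromBlocks_conjTranspose,
      Matrix.fromBlocks_multiply] at hstar
    have := congrArg Matrix.toBlocks₁₁ hstar
    rw [Matrix.toBlocks_fromBlocks₁₁, hone1, Matrix.conjTranspose_conjTranspose] at this
    exact this
  -- invertibility facts
  have hd1 : IsUnit M1.det := (Matrix.isUnit_iff_isUnit_det M1).mp h1
  have hd1' : IsUnit (M1ᴴ).det := by rw [Matrix.det_conjTranspose]; exact hd1.star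
  have hone : ((1 : Matrix (Fin n) (Fin n) ℂ) - M1)ᴴ = 1 - M1ᴴ := by
    simp [Matrix.conjTranspose_sub]
  have hd2 : IsUnit ((1 : Matrix (Fin n) (Fin n) ℂ) - M1).det :=
    (Matrix.isUnit_iff_isUnit_det _).mp h2
  have hd2' : IsUnit ((1 : Matrix (Fin n) (Fin n) ℂ) - M1ᴴ).det := by
    rw [← hone, Matrix.det_conjTranspose]; exact hd2.star
  -- conjTransposes of inverses
  have hct2 : (((1 : Matrix (Fin n) (Fin n) ℂ) - M1)⁻¹)ᴴ
      = ((1 : Matrix (Fin n) (Fin n) ℂ) - M1ᴴ)⁻¹ := by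
    rw [Matrix.conjTranspose_nonsing_inv, hone]
  have hct3 : ((M1ᴴ)⁻¹)ᴴ = M1⁻¹ := by
    rw [Matrix.conjTranspose_nonsing_inv, Matrix.conjTranspose_conjTranspose]
  have main := factorization_aux M1 M1ᴴ (1 - M1) (1 - M1ᴴ) M1⁻¹ (M1ᴴ)⁻¹
      ((1 - M1)⁻¹) ((1 - M1ᴴ)⁻¹) M3ᴴ M3
    rfl
    (Matrix.mul_nonsing_inv M1 hd1)
    (Matrix.nonsing_inv_mul M1 hd1)
    (Matrix.mul_nonsing_inv _ hd1')
    (Matrix.mul_nonsing_inv _ hd2)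
    (Matrix.nonsing_inv_mul _ hd2)
    (Matrix.nonsing_inv_mul _ hd2')
    (by
      have hb : M3 * M3ᴴ = 1 - M1ᴴ * M1 := eq_sub_of_add_eq' hblock
      rw [hb]; noncomm_ring)
  simp only [Matrix.conjTranspose_sub, Matrix.conjTranspose_one, Matrix.conjTranspose_mul,
    Matrix.conjTranspose_nonsing_inv, hct2, hct3, Matrix.conjTranspose_conjTranspose]
  simp only [Matrix.mul_assoc] at main ⊢
  exact main
end

section
/- Let m ≥ 1 be an integer, δ ∈ ℂ with 0 ≤ Re δ, and let μ^{(m)} be the measure (1-|z|²)^{m-1} dσ(z) on the unit disc 𝔻. Then the constant function 1 lies in the closure, in L²(𝔻, μ^{(m)}), of the linear span of the functions z ↦ (1-z)^δ z^k for k = 0, 1, 2, …. -/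
/-!
On the disc `Re (1 - z) > 0` and `Re (1 - r z) > 0` for `0 ≤ r ≤ 1`, so the arguments stay in
`[-π/2, π/2]`, and `|1 - z| ≤ 2 |1 - r z|`; with `Re δ ≥ 0` this bounds
`(1 - z)^δ (1 - r z)^(-δ)` uniformly in `r`. These functions tend to `1` pointwise as `r → 1⁻`,
so by dominated convergence their weighted `L²` distance to `1` tends to `0`. For a fixed `r < 1`,
`(1 - r z)^(-δ)` is holomorphic on a disc of radius `> 1`, hence a uniform limit of its Taylor
polynomials `P` on the unit disc, and dominated convergence once more makes `(1 - z)^δ P(z)` as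
close to `1` as `(1 - z)^δ (1 - r z)^(-δ)`.
-/

open MeasureTheory Metric Filter Topology Complex
open scoped Real Polynomial

lemma norm_cpow_le_of_re_nonneg {a : ℂ} (ha : 0 ≤ a.re) (δ : ℂ) :
    ‖a ^ δ‖ ≤ ‖a‖ ^ δ.re * Real.exp (π / 2 * |δ.im|) := by
  have harg : |a.arg| ≤ π / 2 := abs_arg_le_pi_div_two_iff.2 ha
  have hexp : -(a.arg * δ.im) ≤ π / 2 * |δ.im| := by
    calc -(a.arg * δ.im) ≤ |a.arg| * |δ.im| := by
          rw [← abs_mul]; exact neg_le_abs _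
      _ ≤ π / 2 * |δ.im| := by gcongr
  calc ‖a ^ δ‖ ≤ ‖a‖ ^ δ.re / Real.exp (a.arg * δ.im) := norm_cpow_le a δ
    _ = ‖a‖ ^ δ.re * Real.exp (-(a.arg * δ.im)) := by rw [Real.exp_neg, div_eq_mul_inv]
    _ ≤ ‖a‖ ^ δ.re * Real.exp (π / 2 * |δ.im|) := by gcongr

lemma norm_cpow_mul_cpow_neg_le {a b δ : ℂ} {K : ℝ} (ha : 0 ≤ a.re) (hb : 0 ≤ b.re)
    (hb₀ : b ≠ 0) (hab : ‖a‖ ≤ K * ‖b‖) (hδ : 0 ≤ δ.re) :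
    ‖a ^ δ * b ^ (-δ)‖ ≤ K ^ δ.re * Real.exp (π * |δ.im|) := by
  have hb' : 0 < ‖b‖ := norm_pos_iff.2 hb₀
  have hK : 0 ≤ K := nonneg_of_mul_nonneg_left ((norm_nonneg a).trans hab) hb'
  have hb_neg := norm_cpow_le_of_re_nonneg hb (-δ)
  rw [neg_re, neg_im, abs_neg, Real.rpow_neg hb'.le] at hb_neg
  calc ‖a ^ δ * b ^ (-δ)‖
      ≤ (‖a‖ ^ δ.re * Real.exp (π / 2 * |δ.im|)) *
          ((‖b‖ ^ δ.re)⁻¹ * Real.exp (π / 2 * |δ.im|)) := by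
        rw [norm_mul]
        exact mul_le_mul (norm_cpow_le_of_re_nonneg ha δ) hb_neg (norm_nonneg _) (by positivity)
    _ ≤ ((K * ‖b‖) ^ δ.re * Real.exp (π / 2 * |δ.im|)) *
          ((‖b‖ ^ δ.re)⁻¹ * Real.exp (π / 2 * |δ.im|)) := by gcongr
    _ = K ^ δ.re * Real.exp (π * |δ.im|) := by
        rw [Real.mul_rpow hK hb'.le, show π * |δ.im| = π / 2 * |δ.im| + π / 2 * |δ.im| by ring,
          Real.exp_add]
        field_simp

lemma re_one_sub_mul_pos {r : ℝ} {z : ℂ} (hr : 0 ≤ r) (h : r * ‖z‖ < 1) :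
    0 < (1 - r * z).re := by
  have : r * z.re ≤ r * ‖z‖ := mul_le_mul_of_nonneg_left (re_le_norm z) hr
  simp only [sub_re, one_re, re_ofReal_mul]
  linarith

lemma norm_one_sub_le_two_mul {r : ℝ} {z : ℂ} (hz : ‖z‖ < 1) (hr₀ : 0 ≤ r) (hr₁ : r ≤ 1) :
    ‖1 - z‖ ≤ 2 * ‖1 - r * z‖ := by
  have hre : 1 - r ≤ ‖1 - r * z‖ := by
    have hrz : r * z.re ≤ r := by nlinarith [re_le_norm z]
    have hre_le := re_le_norm (1 - r * z)
    simp only [sub_re, one_re, re_ofReal_mul] at hre_le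
    linarith
  have hsmall : ‖(1 - r : ℂ) * z‖ ≤ 1 - r := by
    rw [norm_mul, show (1 - r : ℂ) = ((1 - r : ℝ) : ℂ) by push_cast; ring, norm_real,
      Real.norm_of_nonneg (by linarith)]
    exact mul_le_of_le_one_right (by linarith) hz.le
  calc ‖1 - z‖ = ‖(1 - r * z) - (1 - r) * z‖ := by ring_nf
    _ ≤ ‖1 - r * z‖ + ‖(1 - r : ℂ) * z‖ := norm_sub_le _ _
    _ ≤ 2 * ‖1 - r * z‖ := by linarith

lemma norm_one_sub_cpow_mul_le {r : ℝ} {z δ : ℂ} (hz : ‖z‖ < 1) (hr₀ : 0 ≤ r) (hr₁ : r ≤ 1)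
    (hδ : 0 ≤ δ.re) :
    ‖(1 - z) ^ δ * (1 - r * z) ^ (-δ)‖ ≤ 2 ^ δ.re * Real.exp (π * |δ.im|) := by
  have hrz : r * ‖z‖ < 1 := by nlinarith [norm_nonneg z]
  have hpos := re_one_sub_mul_pos hr₀ hrz
  refine norm_cpow_mul_cpow_neg_le ?_ hpos.le ?_ (norm_one_sub_le_two_mul hz hr₀ hr₁) hδ
  · simpa using (re_one_sub_mul_pos zero_le_one (by simpa using hz)).le
  · rintro h; simp [h] at hpos

theorem tendsto_setIntegral_norm_sq_mul {α E ι : Type*} [MeasurableSpace α] [NormedAddCommGroup E]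
    {μ : Measure α} {s : Set α} (hs : MeasurableSet s) {l : Filter ι} [l.IsCountablyGenerated]
    {F : ι → α → E} {G : α → E} {w : α → ℝ} {C : ℝ}
    (hF_meas : ∀ᶠ i in l, AEStronglyMeasurable (F i) (μ.restrict s))
    (hF_bound : ∀ᶠ i in l, ∀ x ∈ s, ‖F i x‖ ≤ C) (hw : IntegrableOn w s μ)
    (hF_lim : ∀ x ∈ s, Tendsto (fun i => F i x) l (𝓝 (G x))) :
    Tendsto (fun i => ∫ x in s, ‖F i x‖ ^ 2 * w x ∂μ) l
      (𝓝 (∫ x in s, ‖G x‖ ^ 2 * w x ∂μ)) := by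
  refine tendsto_integral_filter_of_dominated_convergence (fun x => C ^ 2 * ‖w x‖) ?_ ?_
    (hw.norm.const_mul _) ?_
  · filter_upwards [hF_meas] with i hi
    exact (hi.norm.pow 2).mul hw.aestronglyMeasurable
  · filter_upwards [hF_bound] with i hi
    filter_upwards [ae_restrict_mem hs] with x hx
    rw [norm_mul, norm_pow, norm_norm]
    gcongr
    exact hi x hx
  · filter_upwards [ae_restrict_mem hs] with x hx
    exact ((hF_lim x hx).norm.pow 2).mul_const _

lemma tendsto_integral_norm_cpow_mul_cpow_neg_sub_one_sq {δ : ℂ} (hδ : 0 ≤ δ.re) {w : ℂ → ℝ}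
    (hw : IntegrableOn w (ball 0 1)) :
    Tendsto (fun r : ℝ => ∫ z in ball (0 : ℂ) 1, ‖(1 - z) ^ δ * (1 - r * z) ^ (-δ) - 1‖ ^ 2 * w z)
      (𝓝[<] 1) (𝓝 0) := by
  have hr : ∀ᶠ r : ℝ in 𝓝[<] 1, r ∈ Set.Ioo 0 1 := Ioo_mem_nhdsLT one_pos
  have hlim := tendsto_setIntegral_norm_sq_mul (l := 𝓝[<] 1)
    (F := fun (r : ℝ) (z : ℂ) => (1 - z) ^ δ * (1 - (r : ℂ) * z) ^ (-δ) - 1)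
    (G := fun _ => (0 : ℂ)) (C := 2 ^ δ.re * Real.exp (π * |δ.im|) + 1) measurableSet_ball
    (.of_forall fun r => by fun_prop) ?_ hw ?_
  · simpa using hlim
  · filter_upwards [hr] with r hr z hz
    refine (norm_sub_le _ _).trans ?_
    rw [norm_one]
    gcongr
    exact norm_one_sub_cpow_mul_le (mem_ball_zero_iff.1 hz) hr.1.le hr.2.le hδ
  · intro z hz
    have hz1 := re_one_sub_mul_pos zero_le_one (by simpa using hz)
    have hcont : ContinuousAt (fun r : ℝ => (1 - z) ^ δ * (1 - r * z) ^ (-δ) - 1) 1 :=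
      ContinuousAt.sub (continuousAt_const.mul
        (ContinuousAt.cpow (by fun_prop) continuousAt_const (mem_slitPlane_iff.2 (Or.inl hz1))))
        continuousAt_const
    have hz0 : 1 - z ≠ 0 := fun h => by simp [h] at hz1
    have hone : (1 - z) ^ δ * (1 - z) ^ (-δ) - 1 = 0 := by
      rw [← cpow_add _ _ hz0, add_neg_cancel, cpow_zero, sub_self]
    simpa [hone] using hcont.tendsto.mono_left nhdsWithin_le_nhds

lemma differentiableOn_one_sub_mul_cpow {r R : ℝ} (hr : 0 ≤ r) (hrR : r * R < 1) (e : ℂ) :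
    DifferentiableOn ℂ (fun z : ℂ => (1 - r * z) ^ e) (closedBall 0 R) := by
  intro z hz
  have hrz : r * ‖z‖ < 1 := lt_of_le_of_lt (by gcongr; simpa using hz) hrR
  exact ((by fun_prop : DifferentiableAt ℂ (fun z : ℂ => 1 - r * z) z).cpow
    (differentiableAt_const e)
    (mem_slitPlane_iff.2 (Or.inl (re_one_sub_mul_pos hr hrz)))).differentiableWithinAt

theorem DifferentiableOn.exists_polynomial_tendstoUniformlyOn {f : ℂ → ℂ} {r R : ℝ}
    (hf : DifferentiableOn ℂ f (closedBall 0 R)) (hr : 0 ≤ r) (hrR : r < R) :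
    ∃ P : ℕ → ℂ[X], TendstoUniformlyOn (fun n z => (P n).eval z) f atTop (ball 0 r) := by
  lift R to NNReal using hr.trans hrR.le
  lift r to NNReal using hr
  have hps := hf.hasFPowerSeriesOnBall (hrR.trans_le' r.2)
  refine ⟨fun n => ∑ k ∈ Finset.range n,
    Polynomial.C ((cauchyPowerSeries f 0 R).coeff k) * Polynomial.X ^ k, ?_⟩
  convert hps.tendstoUniformlyOn (r' := r) (by exact_mod_cast hrR) using 1
  · ext n z
    simp only [FormalMultilinearSeries.partialSum, FormalMultilinearSeries.apply_eq_pow_smul_coeff,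
      Polynomial.eval_finsetSum, Polynomial.eval_mul, Polynomial.eval_C, Polynomial.eval_pow,
      Polynomial.eval_X, smul_eq_mul, mul_comm]
  · simp

lemma exists_polynomial_integral_norm_mul_sub_one_sq_lt {f g : ℂ → ℂ} {w : ℂ → ℝ} {R C ε : ℝ}
    (hf_meas : AEStronglyMeasurable f (volume.restrict (ball 0 1)))
    (hf : ∀ z ∈ ball (0 : ℂ) 1, ‖f z‖ ≤ C) (hg : DifferentiableOn ℂ g (closedBall 0 R))
    (hR : 1 < R) (hw : IntegrableOn w (ball 0 1))
    (h : ∫ z in ball (0 : ℂ) 1, ‖f z * g z - 1‖ ^ 2 * w z < ε) :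
    ∃ P : ℂ[X], ∫ z in ball (0 : ℂ) 1, ‖f z * P.eval z - 1‖ ^ 2 * w z < ε := by
  obtain ⟨P, hP⟩ := hg.exists_polynomial_tendstoUniformlyOn zero_le_one hR
  obtain ⟨B, hB⟩ := (isCompact_closedBall (0 : ℂ) R).exists_bound_of_continuousOn hg.continuousOn
  have hlim := tendsto_setIntegral_norm_sq_mul (F := fun n z => f z * (P n).eval z - 1)
    (G := fun z => f z * g z - 1) (C := C * (B + 1) + 1) measurableSet_ball
    (.of_forall fun n => (hf_meas.mul (P n).continuous.aestronglyMeasurable).sub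
      aestronglyMeasurable_const) ?_ hw
    (fun z hz => ((hP.tendsto_at hz).const_mul (f z)).sub_const 1)
  · obtain ⟨n, hn⟩ := (hlim.eventually (gt_mem_nhds h)).exists
    exact ⟨P n, hn⟩
  · filter_upwards [Metric.tendstoUniformlyOn_iff.1 hP 1 one_pos] with n hn z hz
    have hPz : ‖(P n).eval z‖ ≤ B + 1 := by
      have hgz := hB z (ball_subset_closedBall.trans (closedBall_subset_closedBall hR.le) hz)
      have hdist := hn z hz
      rw [dist_eq_norm, norm_sub_rev] at hdist
      linarith [norm_le_norm_add_norm_sub' ((P n).eval z) (g z)]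
    have hC : 0 ≤ C := (norm_nonneg _).trans (hf z hz)
    calc ‖f z * (P n).eval z - 1‖ ≤ ‖f z‖ * ‖(P n).eval z‖ + 1 := by
          simpa using norm_sub_le (f z * (P n).eval z) 1
      _ ≤ C * (B + 1) + 1 := by gcongr; exact hf z hz

theorem one_mem_closure_span_nonneg_general (m : ℕ) (δ : ℂ) (hδ : 0 ≤ δ.re) :
    ∀ ε > (0:ℝ), ∃ c : ℕ →₀ ℂ,
      ∫ z in Metric.ball (0:ℂ) 1,
        ‖(∑ k ∈ c.support, c k * (1 - z) ^ δ * z ^ k) - 1‖ ^ 2 *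
          (1 - ‖z‖ ^ 2) ^ (m - 1) < ε := by
  intro ε hε
  have hw : IntegrableOn (fun z : ℂ => (1 - ‖z‖ ^ 2) ^ (m - 1)) (ball 0 1) :=
    (ContinuousOn.integrableOn_compact (isCompact_closedBall 0 1) (by fun_prop)).mono_set
      ball_subset_closedBall
  obtain ⟨r, ⟨hr₀, hr₁⟩, hr⟩ := (Filter.Eventually.and (Ioo_mem_nhdsLT one_pos)
    ((tendsto_integral_norm_cpow_mul_cpow_neg_sub_one_sq hδ hw).eventually
      (gt_mem_nhds hε))).exists
  obtain ⟨R, hR₁, hRr⟩ := exists_between ((one_lt_inv₀ hr₀).2 hr₁)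
  have hrR : r * R < 1 := by simpa [hr₀.ne'] using mul_lt_mul_of_pos_left hRr hr₀
  have hf (z : ℂ) (hz : z ∈ ball (0 : ℂ) 1) :
      ‖(1 - z) ^ δ‖ ≤ 2 ^ δ.re * Real.exp (π * |δ.im|) := by
    simpa using norm_one_sub_cpow_mul_le (r := 0) (mem_ball_zero_iff.1 hz) le_rfl zero_le_one hδ
  obtain ⟨P, hP⟩ := exists_polynomial_integral_norm_mul_sub_one_sq_lt
    (by fun_prop : Measurable fun z : ℂ => (1 - z) ^ δ).aestronglyMeasurable hf
    (differentiableOn_one_sub_mul_cpow hr₀.le hrR (-δ)) hR₁ hw hr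
  refine ⟨P.toFinsupp.coeff, ?_⟩
  convert hP using 5 with z
  simp only [Polynomial.support_toFinsupp, Polynomial.toFinsupp_apply, Polynomial.eval_eq_sum,
    Polynomial.sum_def, Finset.mul_sum]
  exact congrArg (‖· - 1‖) (Finset.sum_congr rfl fun k _ => by ring)

/-- For Re δ ≥ 0, the constant 1 lies in the L²(𝔻,(1-|z|²)^{m-1}dσ)-closure
of span{(1-z)^δ z^k : k ∈ ℕ}: for every ε > 0 there is a finite linear combination whose
squared L² distance to 1 is less than ε. -/
theorem one_mem_closure_span_nonneg (m : ℕ) (hm : 1 ≤ m) (δ : ℂ) (hδ : 0 ≤ δ.re) :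
    ∀ ε > (0:ℝ), ∃ c : ℕ →₀ ℂ,
      ∫ z in Metric.ball (0:ℂ) 1,
        ‖(∑ k ∈ c.support, c k * (1 - z) ^ δ * z ^ k) - 1‖ ^ 2 *
          (1 - ‖z‖ ^ 2) ^ (m - 1) < ε :=
  one_mem_closure_span_nonneg_general m δ hδ
end

section
/- Let m ≥ 1 be an integer and δ ∈ ℂ with -1/2 < Re δ < 0. Then the constant function 1 lies in the closure, in L²(𝔻, μ^{(m)}) where dμ^{(m)}(z) = (1-|z|²)^{m-1} dσ(z), of the linear span of the functions z ↦ (1-z)^δ z^k, k = 0, 1, 2, …. -/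
/-! Since `Re (-δ) > 0`, the function `(1 - z) ^ (-δ)` is continuous on the closed disc and
holomorphic inside, so it is a uniform limit on `𝔻` of polynomials `p` (Taylor polynomials of
the dilations `(1 - r z) ^ (-δ)`, `r < 1`). Writing
`(1 - z) ^ δ p - 1 = (1 - z) ^ δ (p - (1 - z) ^ (-δ))` and using that the weight is at most `1`,
the weighted `L²` error is at most `‖p - (1 - z) ^ (-δ)‖²_∞ ∫_𝔻 |(1 - z) ^ δ|²`.
The last integral is finite because
`|(1 - z) ^ δ|² ≤ e^{2π |Im δ|} (1 - Re z) ^ {2 Re δ}` and `2 Re δ > -1`. -/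

open MeasureTheory Metric Set Polynomial

namespace Complex

lemma one_sub_mem_slitPlane {z : ℂ} (hz : ‖z‖ ≤ 1) (hz₁ : z ≠ 1) : 1 - z ∈ slitPlane := by
  rw [mem_slitPlane_iff]
  by_cases him : z.im = 0
  · have hre : z.re ≠ 1 := fun h => hz₁ (Complex.ext h him)
    left
    simp only [sub_re, one_re, sub_pos]
    exact lt_of_le_of_ne ((re_le_norm z).trans hz) hre
  · right
    simpa using him

theorem diffContOnCl_one_sub_cpow {a : ℂ} (ha : 0 < a.re) :
    DiffContOnCl ℂ (fun z : ℂ => (1 - z) ^ a) (ball 0 1) := by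
  refine ⟨fun z hz => ?_, ?_⟩
  · have := mem_slitPlane_of_norm_lt_one (z := -z) (by simpa using hz)
    exact ((differentiableAt_const 1).sub differentiableAt_id |>.cpow_const
      (by simpa [sub_eq_add_neg] using this)).differentiableWithinAt
  rw [closure_ball 0 one_ne_zero]
  intro z hz
  refine ContinuousAt.continuousWithinAt ?_
  by_cases hz₁ : z = 1
  · subst hz₁
    have h0 : ContinuousAt (fun w : ℂ => w ^ a) 0 :=
      (continuousAt_cpow_zero_of_re_pos ha).comp (x := 0)
        (continuous_id.prodMk continuous_const).continuousAt
    exact h0.comp_of_eq (continuous_const.sub continuous_id).continuousAt (sub_self 1)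
  · have hslit := one_sub_mem_slitPlane (mem_closedBall_zero_iff.mp hz) hz₁
    exact (continuousAt_cpow_const hslit).comp (continuous_const.sub continuous_id).continuousAt

theorem norm_cpow_le_exp_mul_re_rpow {w a : ℂ} (hw : 0 < w.re) (ha : a.re ≤ 0) :
    ‖w ^ a‖ ≤ Real.exp (Real.pi * |a.im|) * w.re ^ a.re := by
  have harg : -(arg w * a.im) ≤ Real.pi * |a.im| := by
    calc -(arg w * a.im) ≤ |arg w| * |a.im| := by rw [← abs_mul]; exact neg_le_abs _
      _ ≤ Real.pi * |a.im| := by gcongr; exact abs_arg_le_pi w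
  calc ‖w ^ a‖ ≤ ‖w‖ ^ a.re / Real.exp (arg w * a.im) := norm_cpow_le w a
    _ = Real.exp (-(arg w * a.im)) * ‖w‖ ^ a.re := by rw [Real.exp_neg]; ring
    _ ≤ Real.exp (Real.pi * |a.im|) * w.re ^ a.re :=
      mul_le_mul (Real.exp_le_exp.2 harg) (Real.rpow_le_rpow_of_nonpos hw (re_le_norm w) ha)
          (by positivity) (by positivity)

theorem cpow_mul_cpow_neg {x : ℂ} (hx : x ≠ 0) (y : ℂ) : x ^ y * x ^ (-y) = 1 := by
  rw [cpow_neg, mul_inv_cancel₀ (cpow_ne_zero_iff.2 (Or.inl hx))]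

end Complex

theorem FormalMultilinearSeries.partialSum_eq_eval {𝕜 : Type*} [NontriviallyNormedField 𝕜]
    (p : FormalMultilinearSeries 𝕜 𝕜 𝕜) (n : ℕ) (z : 𝕜) :
    p.partialSum n z = (∑ k ∈ Finset.range n, C (p.coeff k) * X ^ k).eval z := by
  simp only [partialSum, eval_finsetSum, eval_mul, eval_C, eval_pow, eval_X,
    apply_eq_pow_smul_coeff, smul_eq_mul, mul_comm]

theorem exists_polynomial_near_of_differentiableOn_ball {g : ℂ → ℂ} {R : ℝ} (hR : 1 < R)
    (hg : DifferentiableOn ℂ g (ball 0 R)) {η : ℝ} (hη : 0 < η) :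
    ∃ p : ℂ[X], ∀ z ∈ ball (0 : ℂ) 1, ‖p.eval z - g z‖ < η := by
  obtain ⟨R', h1R', hR'R⟩ := exists_between hR
  have hR' : (R'.toNNReal : ℝ) = R' := Real.coe_toNNReal _ (by linarith)
  have hfp := (hg.mono (hR' ▸ closedBall_subset_ball hR'R)).hasFPowerSeriesOnBall
    (by simpa using h1R'.trans' one_pos)
  have htu := hfp.tendstoUniformlyOn' (r' := 1) (by simpa using h1R')
  obtain ⟨N, hN⟩ := (Metric.tendstoUniformlyOn_iff.mp htu η hη).exists
  refine ⟨∑ k ∈ Finset.range N, C ((cauchyPowerSeries g 0 R'.toNNReal).coeff k) * X ^ k,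
    fun z hz => ?_⟩
  rw [← FormalMultilinearSeries.partialSum_eq_eval, ← dist_eq_norm, dist_comm]
  simpa using hN z (by simpa using hz)

theorem ContinuousOn.exists_dilation_near {E : Type*} [PseudoMetricSpace E] {f : ℂ → E}
    (hf : ContinuousOn f (closedBall 0 1)) {η : ℝ} (hη : 0 < η) :
    ∃ r : ℝ, 0 < r ∧ r < 1 ∧ ∀ z ∈ ball (0 : ℂ) 1, dist (f (r * z)) (f z) < η := by
  obtain ⟨d, hd, hf_uc⟩ := Metric.uniformContinuousOn_iff.mp
    ((isCompact_closedBall 0 1).uniformContinuousOn_of_continuous hf) η hη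
  obtain ⟨r, hr, hr₁⟩ := exists_between (max_lt zero_lt_one (sub_lt_self 1 hd))
  obtain ⟨hr₀, hrd⟩ := max_lt_iff.mp hr
  refine ⟨r, hr₀, hr₁, fun z hz => hf_uc _ ?_ _ (ball_subset_closedBall hz) ?_⟩
  all_goals
    have hz : ‖z‖ < 1 := mem_ball_zero_iff.mp hz
  · rw [mem_closedBall_zero_iff, norm_mul, Complex.norm_real, Real.norm_of_nonneg hr₀.le]
    nlinarith [norm_nonneg z]
  · have hrz : (r : ℂ) * z - z = ((r - 1 : ℝ) : ℂ) * z := by push_cast; ring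
    rw [dist_eq_norm, hrz, norm_mul, Complex.norm_real, Real.norm_of_nonpos (by linarith)]
    nlinarith [norm_nonneg z]

theorem DiffContOnCl.exists_polynomial_near {f : ℂ → ℂ} (hf : DiffContOnCl ℂ f (ball 0 1))
    {η : ℝ} (hη : 0 < η) : ∃ p : ℂ[X], ∀ z ∈ ball (0 : ℂ) 1, ‖p.eval z - f z‖ < η := by
  have hcont : ContinuousOn f (closedBall 0 1) := by
    simpa [closure_ball (0 : ℂ) one_ne_zero] using hf.continuousOn
  obtain ⟨r, hr₀, hr₁, hr⟩ := hcont.exists_dilation_near (half_pos hη)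
  have hg : DifferentiableOn ℂ (fun z => f (r * z)) (ball 0 r⁻¹) := by
    refine hf.differentiableOn.comp (differentiableOn_const _ |>.mul differentiableOn_id) ?_
    intro z hz
    rw [mem_ball_zero_iff, norm_mul, Complex.norm_real, Real.norm_of_nonneg hr₀.le]
    rw [mem_ball_zero_iff] at hz
    calc r * ‖z‖ < r * r⁻¹ := by gcongr
      _ = 1 := mul_inv_cancel₀ hr₀.ne'
  obtain ⟨p, hp⟩ := exists_polynomial_near_of_differentiableOn_ball (one_lt_inv₀ hr₀ |>.mpr hr₁)
    hg (half_pos hη)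
  refine ⟨p, fun z hz => ?_⟩
  calc ‖p.eval z - f z‖ ≤ ‖p.eval z - f (r * z)‖ + dist (f (r * z)) (f z) := by
        rw [dist_eq_norm]; exact norm_sub_le_norm_sub_add_norm_sub _ _ _
    _ < η / 2 + η / 2 := add_lt_add (hp z hz) (hr z hz)
    _ = η := add_halves η

theorem integrableOn_one_sub_re_rpow_ball {a : ℝ} (ha : -1 < a) :
    IntegrableOn (fun z : ℂ => (1 - z.re) ^ a) (ball 0 1) := by
  have hre : IntegrableOn (fun x : ℝ => (1 - x) ^ a) (Ioo (-1) 1) := by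
    have := (intervalIntegral.intervalIntegrable_rpow' ha (a := 2) (b := 0)).comp_sub_left 1
    norm_num at this
    exact (intervalIntegrable_iff_integrableOn_Ioo_of_le (by norm_num)).mp this
  have hprod : IntegrableOn (fun p : ℝ × ℝ => (1 - p.1) ^ a) (Ioo (-1) 1 ×ˢ Ioo (-1) 1) := by
    rw [IntegrableOn, Measure.volume_eq_prod, ← Measure.prod_restrict]
    have : IsFiniteMeasure (volume.restrict (Ioo (-1 : ℝ) 1)) := by
      constructor
      simp
    exact hre.comp_fst _
  rw [← Complex.volume_preserving_equiv_real_prod.integrableOn_comp_preimage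
    Complex.measurableEquivRealProd.measurableEmbedding] at hprod
  refine hprod.mono_set fun z hz => ?_
  have hz := mem_ball_zero_iff.mp hz
  change (z.re, z.im) ∈ Ioo (-1) 1 ×ˢ Ioo (-1) 1
  simp only [mem_prod, mem_Ioo, ← abs_lt]
  exact ⟨(Complex.abs_re_le_norm z).trans_lt hz, (Complex.abs_im_le_norm z).trans_lt hz⟩

theorem integrableOn_sq_norm_one_sub_cpow_ball {a : ℂ} (ha₁ : -1 / 2 < a.re) (ha₂ : a.re ≤ 0) :
    IntegrableOn (fun z : ℂ => ‖(1 - z) ^ a‖ ^ 2) (ball 0 1) := by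
  have hmeas : Measurable fun z : ℂ => ‖(1 - z) ^ a‖ ^ 2 :=
    ((measurable_const.sub measurable_id).pow_const a).norm.pow_const 2
  refine ((integrableOn_one_sub_re_rpow_ball (a := 2 * a.re) (by linarith)).const_mul
    (Real.exp (Real.pi * |a.im|) ^ 2)).mono' hmeas.aestronglyMeasurable ?_
  filter_upwards [ae_restrict_mem measurableSet_ball] with z hz
  have hre : 0 < (1 - z).re := by
    simpa using (Complex.re_le_norm z).trans_lt (mem_ball_zero_iff.mp hz)
  calc ‖‖(1 - z) ^ a‖ ^ 2‖ = ‖(1 - z) ^ a‖ ^ 2 := by simp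
    _ ≤ (Real.exp (Real.pi * |a.im|) * (1 - z).re ^ a.re) ^ 2 := by
      gcongr
      exact Complex.norm_cpow_le_exp_mul_re_rpow hre ha₂
    _ = Real.exp (Real.pi * |a.im|) ^ 2 * (1 - z.re) ^ (2 * a.re) := by
      rw [mul_pow, ← Real.rpow_mul_natCast hre.le, mul_comm a.re]
      simp

theorem MeasureTheory.setIntegral_sq_norm_mul_sub_one_mul_le {α : Type*} [MeasurableSpace α]
    {μ : Measure α} {s : Set α} (hs : MeasurableSet s) {u v q : α → ℂ} {w : α → ℝ} {η : ℝ}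
    (hu : IntegrableOn (fun x => ‖u x‖ ^ 2) s μ) (huv : ∀ x ∈ s, u x * v x = 1)
    (hq : ∀ x ∈ s, ‖q x - v x‖ ≤ η) (hw : ∀ x ∈ s, w x ∈ Icc 0 1) :
    ∫ x in s, ‖u x * q x - 1‖ ^ 2 * w x ∂μ ≤ η ^ 2 * ∫ x in s, ‖u x‖ ^ 2 ∂μ := by
  rw [← integral_const_mul]
  refine integral_mono_of_nonneg ?_ (hu.const_mul _) ?_
  all_goals filter_upwards [ae_restrict_mem hs] with x hx
  · exact mul_nonneg (by positivity) (hw x hx).1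
  have hsub : u x * q x - 1 = u x * (q x - v x) := by rw [mul_sub, huv x hx]
  calc ‖u x * q x - 1‖ ^ 2 * w x ≤ (‖u x‖ * η) ^ 2 * 1 := by
        rw [hsub, norm_mul]
        gcongr
        exacts [(hw x hx).1, hq x hx, (hw x hx).2]
    _ = η ^ 2 * ‖u x‖ ^ 2 := by ring

lemma one_sub_norm_sq_pow_mem_Icc {z : ℂ} (hz : z ∈ ball 0 1) (n : ℕ) :
    (1 - ‖z‖ ^ 2) ^ n ∈ Icc 0 1 := by
  have hz : ‖z‖ < 1 := mem_ball_zero_iff.mp hz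
  exact ⟨pow_nonneg (by nlinarith [norm_nonneg z]) n,
    pow_le_one₀ (by nlinarith [norm_nonneg z]) (by nlinarith [norm_nonneg z])⟩

theorem one_mem_closure_span_neg_general (m : ℕ) (δ : ℂ)
    (hδ₁ : -1/2 < δ.re) (hδ₂ : δ.re < 0) :
    ∀ ε > (0:ℝ), ∃ c : ℕ →₀ ℂ,
      ∫ z in Metric.ball (0:ℂ) 1,
        ‖(∑ k ∈ c.support, c k * (1 - z) ^ δ * z ^ k) - 1‖ ^ 2 *
          (1 - ‖z‖ ^ 2) ^ (m - 1) < ε := by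
  intro ε hε
  obtain ⟨η, hη, hηε⟩ := exists_pos_mul_lt hε (∫ z in ball (0 : ℂ) 1, ‖(1 - z) ^ δ‖ ^ 2)
  obtain ⟨p, hp⟩ := (Complex.diffContOnCl_one_sub_cpow (a := -δ) (by simpa using hδ₂))
    |>.exists_polynomial_near (Real.sqrt_pos.2 hη)
  refine ⟨⟨p.support, p.coeff, fun _ => mem_support_iff⟩, ?_⟩
  have hsum (z : ℂ) :
      ∑ k ∈ p.support, p.coeff k * (1 - z) ^ δ * z ^ k = (1 - z) ^ δ * p.eval z := by
    rw [eval_eq_sum, Polynomial.sum_def, Finset.mul_sum]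
    congr! 1 with k
    ring
  calc _ ≤ √η ^ 2 * ∫ z in ball (0 : ℂ) 1, ‖(1 - z) ^ δ‖ ^ 2 := by
        simp only [Finsupp.coe_mk, hsum]
        refine setIntegral_sq_norm_mul_sub_one_mul_le measurableSet_ball
          (integrableOn_sq_norm_one_sub_cpow_ball hδ₁ hδ₂.le) (fun z hz => ?_)
          (fun z hz => (hp z hz).le) (fun z hz => one_sub_norm_sq_pow_mem_Icc hz _)
        exact Complex.cpow_mul_cpow_neg (sub_ne_zero.2 (by rintro rfl; simp at hz)) δ
    _ < ε := by rwa [Real.sq_sqrt hη.le, mul_comm]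

/-- For -1/2 < Re δ < 0, the constant 1 lies in the
L²(𝔻,(1-|z|²)^{m-1}dσ)-closure of span{(1-z)^δ z^k : k ∈ ℕ}. -/
theorem one_mem_closure_span_neg (m : ℕ) (hm : 1 ≤ m) (δ : ℂ)
    (hδ₁ : -1/2 < δ.re) (hδ₂ : δ.re < 0) :
    ∀ ε > (0:ℝ), ∃ c : ℕ →₀ ℂ,
      ∫ z in Metric.ball (0:ℂ) 1,
        ‖(∑ k ∈ c.support, c k * (1 - z) ^ δ * z ^ k) - 1‖ ^ 2 *
          (1 - ‖z‖ ^ 2) ^ (m - 1) < ε :=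
  one_mem_closure_span_neg_general m δ hδ₁ hδ₂
end

section
/- Let A be an n×n complex matrix, R an n×m complex matrix, and suppose A and I - A are invertible, and A* A + R R* = I_n. Then I + (R* A⁻¹)(R* A⁻¹)* = [I - R* (I-A)⁻¹ (A*)⁻¹ R]* · [I - R* (I-A)⁻¹ (A*)⁻¹ R]. -/
open Matrix

/-- If A, I - A are invertible and A*A + RR* = I, then
I + (R*A⁻¹)(R*A⁻¹)* = [I - R*(I-A)⁻¹(A*)⁻¹R]* · [I - R*(I-A)⁻¹(A*)⁻¹R]. -/
theorem factorization_identity_abstract {n m : ℕ}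
    (A : Matrix (Fin n) (Fin n) ℂ) (R : Matrix (Fin n) (Fin m) ℂ)
    (hA : IsUnit A) (hIA : IsUnit ((1 : Matrix (Fin n) (Fin n) ℂ) - A))
    (hrel : Aᴴ * A + R * Rᴴ = 1) :
    (1 : Matrix (Fin m) (Fin m) ℂ) + (Rᴴ * A⁻¹) * (Rᴴ * A⁻¹)ᴴ
      = ((1 : Matrix (Fin m) (Fin m) ℂ) - Rᴴ * (1 - A)⁻¹ * (Aᴴ)⁻¹ * R)ᴴ *
        ((1 : Matrix (Fin m) (Fin m) ℂ) - Rᴴ * (1 - A)⁻¹ * (Aᴴ)⁻¹ * R) := by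
  have hAd : IsUnit A.det := (Matrix.isUnit_iff_isUnit_det A).mp hA
  have hIAd : IsUnit ((1 : Matrix (Fin n) (Fin n) ℂ) - A).det :=
    (Matrix.isUnit_iff_isUnit_det _).mp hIA
  have h1 : A * A⁻¹ = 1 := Matrix.mul_nonsing_inv A hAd
  have h2 : A⁻¹ * A = 1 := Matrix.nonsing_inv_mul A hAd
  have h3 : (1 - A) * (1 - A)⁻¹ = 1 := Matrix.mul_nonsing_inv _ hIAd
  have h4 : (1 - A)⁻¹ * (1 - A) = 1 := Matrix.nonsing_inv_mul _ hIAd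
  have hIAh : ((1 : Matrix (Fin n) (Fin n) ℂ) - A)ᴴ = 1 - Aᴴ := by
    rw [conjTranspose_sub, conjTranspose_one]
  have hBc : (A⁻¹)ᴴ = (Aᴴ)⁻¹ := Matrix.conjTranspose_nonsing_inv A
  have hCc : ((Aᴴ)⁻¹)ᴴ = A⁻¹ := by
    rw [Matrix.conjTranspose_nonsing_inv, conjTranspose_conjTranspose]
  have hXc : ((1 - A)⁻¹)ᴴ = (1 - Aᴴ)⁻¹ := by
    rw [Matrix.conjTranspose_nonsing_inv, hIAh]
  have h1h : Aᴴ * (Aᴴ)⁻¹ = 1 := by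
    rw [← hBc, ← conjTranspose_mul, h2, conjTranspose_one]
  have h2h : (Aᴴ)⁻¹ * Aᴴ = 1 := by
    rw [← hBc, ← conjTranspose_mul, h1, conjTranspose_one]
  have h3h : (1 - Aᴴ) * (1 - Aᴴ)⁻¹ = 1 := by
    rw [← hXc, ← hIAh, ← conjTranspose_mul, h4, conjTranspose_one]
  have h4h : (1 - Aᴴ)⁻¹ * (1 - Aᴴ) = 1 := by
    rw [← hXc, ← hIAh, ← conjTranspose_mul, h3, conjTranspose_one]
  have hR : R * Rᴴ = 1 - Aᴴ * A := by rw [← hrel]; noncomm_ring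
  -- expand the conjugate transposes in the goal
  simp only [conjTranspose_sub, conjTranspose_one, conjTranspose_mul,
    conjTranspose_conjTranspose, hBc, hCc, hXc]
  -- now generalize all inverses to opaque atoms
  generalize hBdef : A⁻¹ = B at *
  generalize hCdef : (Aᴴ)⁻¹ = C at *
  generalize hXdef : (1 - A)⁻¹ = X at *
  generalize hYdef : (1 - Aᴴ)⁻¹ = Y at *
  -- key identities
  have key : Y * (R * Rᴴ) * X = X + Y * Aᴴ := by
    have hsplit : R * Rᴴ = (1 - Aᴴ) + Aᴴ * (1 - A) := by rw [hR]; noncomm_ring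
    calc Y * (R * Rᴴ) * X = (Y * (1 - Aᴴ)) * X + Y * Aᴴ * ((1 - A) * X) := by
          rw [hsplit]; noncomm_ring
      _ = X + Y * Aᴴ := by rw [h4h, h3]; noncomm_ring
  have hBX : B * X = X + B := by
    have : B * ((1 - A) * X) = B := by rw [h3, mul_one]
    calc B * X = B * ((1 - A) * X) + (B * A) * X := by noncomm_ring
      _ = B + 1 * X := by rw [this, h2]
      _ = X + B := by noncomm_ring
  calc (1 : Matrix (Fin m) (Fin m) ℂ) + Rᴴ * B * (C * R)
      = 1 - Rᴴ * B * Y * R - Rᴴ * X * C * R + Rᴴ * ((X + B) * C) * R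
        + Rᴴ * B * (Y * (Aᴴ * C)) * R := by
        rw [h1h]
        simp only [Matrix.mul_add, Matrix.add_mul, Matrix.sub_mul, Matrix.mul_sub, Matrix.mul_one, Matrix.one_mul, Matrix.mul_assoc]
        abel
    _ = 1 - Rᴴ * B * Y * R - Rᴴ * X * C * R + Rᴴ * ((B * X) * C) * R
        + Rᴴ * B * (Y * (Aᴴ * C)) * R := by rw [hBX]
    _ = 1 - Rᴴ * B * Y * R - Rᴴ * X * C * R + Rᴴ * B * ((X + Y * Aᴴ) * (C * R)) := by
        simp only [Matrix.mul_add, Matrix.add_mul, Matrix.sub_mul, Matrix.mul_sub, Matrix.mul_one, Matrix.one_mul, Matrix.mul_assoc]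
        abel
    _ = 1 - Rᴴ * B * Y * R - Rᴴ * X * C * R + Rᴴ * B * ((Y * (R * Rᴴ) * X) * (C * R)) := by
        rw [key]
    _ = (1 - Rᴴ * (B * (Y * R))) * (1 - Rᴴ * X * C * R) := by
        simp only [Matrix.mul_add, Matrix.add_mul, Matrix.sub_mul, Matrix.mul_sub, Matrix.mul_one, Matrix.one_mul, Matrix.mul_assoc]
        abel
end
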